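/- Let R, P, Q, T be points in ℝ² such that the line through R and Q is parallel to (and distinct from) the line through P and T, and the line through R and P is not parallel to the line through Q and T. Let Y be the intersection point of the lines RT and PQ, and let X be the intersection point of the lines RP and QT. Then the line through X and Y passes through the midpoint of the segment RQ and through the midpoint of the segment PT. -/
import Mathlib


open Set

noncomputable section

/-- The line through two points in the plane `ℝ × ℝ`. -/
def line (a b : ℝ × ℝ) : AffineSubspace ℝ (ℝ × ℝ) := affineSpan ℝ {a, b}

/-- Two lines are parallel if they have the same direction but do not coincide. -/
def ParallelLines (L₁ L₂ : AffineSubspace ℝ (ℝ × ℝ)) : Prop :=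
  L₁.direction = L₂.direction ∧ L₁ ≠ L₂

/-- Membership in a line, parametrically. -/
lemma mem_line_iff {a b p : ℝ × ℝ} : p ∈ line a b ↔ ∃ r : ℝ, p = r • (b - a) + a := by
  rw [line, ← AffineSubspace.vsub_right_mem_direction_iff_mem (left_mem_affineSpan_pair ℝ a b),
    direction_affineSpan, mem_vectorSpan_pair_rev]
  simp only [vsub_eq_sub]
  constructor
  · rintro ⟨r, hr⟩; exact ⟨r, by rw [hr]; abel⟩
  · rintro ⟨r, hr⟩; exact ⟨r, by rw [hr]; abel⟩

/-- Midpoint lemma: if `RQ ∥ PT`, `RP` is not parallel to `QT`, `Y` is the intersection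
of lines `RT` and `PQ`, and `X` is the intersection of lines `RP` and `QT`, then the line
`XY` passes through the midpoints of the segments `RQ` and `PT`. -/
theorem midpoints_mem_line (R P Q T X Y : ℝ × ℝ)
    (hRQ : R ≠ Q) (hPT : P ≠ T) (hRP : R ≠ P) (hQT : Q ≠ T) (hRT : R ≠ T) (hPQ : P ≠ Q)
    (hpar : ParallelLines (line R Q) (line P T))
    (hnpar : ¬ ParallelLines (line R P) (line Q T))
    (hY₁ : Y ∈ line R T) (hY₂ : Y ∈ line P Q)
    (hX₁ : X ∈ line R P) (hX₂ : X ∈ line Q T)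
    (hXY : X ≠ Y) :
    midpoint ℝ R Q ∈ line X Y ∧ midpoint ℝ P T ∈ line X Y := by
  obtain ⟨hdir, hne⟩ := hpar
  have hd : T - P ≠ 0 := sub_ne_zero.mpr hPT.symm
  -- extract s with Q = s • (T - P) + R
  have hmem : Q - R ∈ (line P T).direction := by
    rw [← hdir, line, direction_affineSpan, mem_vectorSpan_pair_rev]
    exact ⟨1, by simp⟩
  rw [line, direction_affineSpan, mem_vectorSpan_pair_rev] at hmem
  simp only [vsub_eq_sub] at hmem
  obtain ⟨s, hs⟩ := hmem
  have hs0 : s ≠ 0 := by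
    intro h; rw [h, zero_smul] at hs
    exact hRQ (sub_eq_zero.mp hs.symm).symm
  have hQ : Q = s • (T - P) + R := sub_eq_iff_eq_add.mp hs.symm
  subst hQ
  -- linear independence of P - R and T - P
  have hindep : ∀ α β : ℝ, α • (P - R) + β • (T - P) = 0 → α = 0 ∧ β = 0 := by
    intro α β h
    by_cases hα : α = 0
    · subst hα
      rw [zero_smul, zero_add] at h
      rcases smul_eq_zero.mp h with h' | h'
      · exact ⟨rfl, h'⟩
      · exact absurd h' hd
    · exfalso
      apply hne
      have h2 : α • (P - R) = (-β) • (T - P) := by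
        linear_combination (norm := module) h
      have hu : P - R = (α⁻¹ * (-β)) • (T - P) := by
        calc P - R = α⁻¹ • (α • (P - R)) := (inv_smul_smul₀ hα _).symm
          _ = (α⁻¹ * (-β)) • (T - P) := by rw [h2, smul_smul]
      set l := α⁻¹ * (-β) with hldef
      apply le_antisymm
      · rw [line, affineSpan_le]
        refine Set.insert_subset_iff.mpr ⟨?_, Set.singleton_subset_iff.mpr ?_⟩
        · exact mem_line_iff.mpr ⟨-l, by linear_combination (norm := module) (-1 : ℝ) • hu⟩
        · exact mem_line_iff.mpr ⟨s - l, by linear_combination (norm := module) (-1 : ℝ) • hu⟩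
      · rw [line, affineSpan_le]
        refine Set.insert_subset_iff.mpr ⟨?_, Set.singleton_subset_iff.mpr ?_⟩
        · refine mem_line_iff.mpr ⟨l / s, ?_⟩
          have e1 : (s • (T - P) + R) - R = s • (T - P) := by abel
          rw [e1, smul_smul, div_mul_cancel₀ l hs0]
          linear_combination (norm := module) hu
        · refine mem_line_iff.mpr ⟨(l + 1) / s, ?_⟩
          have e1 : (s • (T - P) + R) - R = s • (T - P) := by abel
          rw [e1, smul_smul, div_mul_cancel₀ _ hs0]
          linear_combination (norm := module) hu
  -- parametrize the intersection points
  rw [mem_line_iff] at hY₁ hY₂ hX₁ hX₂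
  obtain ⟨a, hYa⟩ := hY₁
  obtain ⟨b, hYb⟩ := hY₂
  obtain ⟨c, hXa⟩ := hX₁
  obtain ⟨e, hXb⟩ := hX₂
  subst hYa
  subst hXa
  have E1 : (a - 1 + b) • (P - R) + (a - b * s) • (T - P) = 0 := by
    linear_combination (norm := module) hYb
  have E2 : (c - e) • (P - R) + (-s - e + e * s) • (T - P) = 0 := by
    linear_combination (norm := module) hXb
  obtain ⟨e1u, e1d⟩ := hindep _ _ E1
  obtain ⟨e2u, e2d⟩ := hindep _ _ E2
  have ha' : a * (s + 1) = s := by linear_combination e1d + s * e1u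
  have hc' : c * (s - 1) = s := by linear_combination e2d + (s - 1) * e2u
  have hs1 : s - 1 ≠ 0 := by
    intro h; exact hs0 (by rw [← hc', h, mul_zero])
  have hs2 : s + 1 ≠ 0 := by
    intro h
    have : s = 0 := by rw [← ha', h, mul_zero]
    rw [this] at h; norm_num at h
  have haval : a = s / (s + 1) := by field_simp; linear_combination ha'
  have hcval : c = s / (s - 1) := by field_simp; linear_combination hc'
  subst haval
  subst hcval
  constructor
  · refine mem_line_iff.mpr ⟨(1 + s) / 2, ?_⟩
    rw [show midpoint ℝ R (s • (T - P) + R) = (1/2 : ℝ) • (R + (s • (T - P) + R)) from by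
      rw [midpoint_eq_smul_add]; norm_num]
    match_scalars <;> field_simp <;> ring
  · refine mem_line_iff.mpr ⟨(1 + s) / (2 * s), ?_⟩
    rw [show midpoint ℝ P T = (1/2 : ℝ) • (P + T) from by rw [midpoint_eq_smul_add]; norm_num]
    match_scalars <;> field_simp <;> ring
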